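/- For every natural number n, b(n+1) − b(n) = 2 − c(n); in particular b(n+1) − b(n) ∈ {0, 1, 2}. -/

import Mathlib

/-! Write `N x = #{m | a m ≤ x}`. Everything rests on `x + 1 ≤ N x ≤ x + 2`: given these
bounds, `b (n + 1)` is forced to be `2 n + 2 - N n`, and `c n = N n - N (n - 1)`
(with `N (-1) = 0`) then gives `b (n + 1) - b n = 2 - c n`.

For the bounds: on the Fibonacci block `(F (j+1), F (j+2)]` the sequence is the reflection
`F (j+2) - a (m - F (j+1))` of its values on `[1, F j]`. Hence the counts
`C j x = #{m ∈ [1, F j] | a m ≤ x}` satisfy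
`C (j+2) x + C j (F (j+2) - 1 - x) = C (j+1) x + F j`, and `x ≤ C j x ≤ x + 1`
(the lower bound for `x ≤ F j`) follows by two-step induction on `j`.
Finally `m ≤ 2 a m`, so `N x = C j x + 1` as soon as `2 x ≤ F j`. -/

/-- The sequence A105774: `a n = n` for `n ≤ 1`, and
`a n = fib (j+1) - a (n - fib j)` where `j ≥ 2` is the unique index
with `fib j < n ≤ fib (j+1)` (realized as the greatest `j ≤ n` with `fib j < n`). -/
def a (n : ℕ) : ℕ :=
  if _h : n ≤ 1 then n
  else
    Nat.fib (Nat.findGreatest (fun j => Nat.fib j < n) n + 1) -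
      a (n - Nat.fib (Nat.findGreatest (fun j => Nat.fib j < n) n))
decreasing_by
  have h2 : 2 ≤ n := by omega
  have hj : 2 ≤ Nat.findGreatest (fun j => Nat.fib j < n) n :=
    Nat.le_findGreatest h2 (by show Nat.fib 2 < n; simp [Nat.fib_two]; omega)
  have hpos : 0 < Nat.fib (Nat.findGreatest (fun j => Nat.fib j < n) n) :=
    Nat.fib_pos.mpr (by omega)
  omega

/-- `c n` is the number of indices `m` with `a m = n`. -/
noncomputable def c (n : ℕ) : ℕ := {m : ℕ | a m = n}.ncard

/-- `b n` is the `n`-th term (0-indexed) of the values of `a` arranged in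
nondecreasing order with multiplicity: the least `x` with `#{m | a m ≤ x} ≥ n + 1`
(OEIS A368200). -/
noncomputable def b (n : ℕ) : ℕ := sInf {x : ℕ | n + 1 ≤ {m : ℕ | a m ≤ x}.ncard}

open Nat Finset

theorem a_zero : a 0 = 0 := by
  rw [a]; rfl

theorem a_one : a 1 = 1 := by
  rw [a]; rfl

theorem a_fib_add {j m : ℕ} (hm : 0 < m) (hmj : m ≤ fib j) :
    a (fib (j + 1) + m) = fib (j + 2) - a m := by
  have hfib : fib (j + 2) = fib j + fib (j + 1) := fib_add_two
  have hgreatest :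
      Nat.findGreatest (fun i => fib i < fib (j + 1) + m) (fib (j + 1) + m) = j + 1 := by
    rw [Nat.findGreatest_eq_iff]
    refine ⟨by have := le_fib_add_one (j + 1); omega, fun _ => by omega, fun k hk _ => ?_⟩
    have := fib_mono (show j + 2 ≤ k by omega)
    omega
  have hpos : 0 < fib (j + 1) := fib_pos.2 j.succ_pos
  rw [a, dif_neg (by omega), hgreatest, Nat.add_sub_cancel_left]

theorem exists_eq_fib_add {m : ℕ} (hm : 2 ≤ m) :
    ∃ j m', 0 < m' ∧ m' ≤ fib j ∧ m = fib (j + 1) + m' := by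
  have hex : ∃ i, m ≤ fib i := ⟨m + 1, by have := le_fib_add_one (m + 1); omega⟩
  obtain ⟨i, hi, hmin⟩ : ∃ i, m ≤ fib i ∧ ∀ k < i, fib k < m :=
    ⟨Nat.find hex, Nat.find_spec hex, fun k hk => not_le.1 (Nat.find_min hex hk)⟩
  rcases i with _ | _ | j
  · rw [fib_zero] at hi; omega
  · rw [fib_one] at hi; omega
  · have hi : m ≤ fib (j + 2) := hi
    have := hmin (j + 1) (by omega)
    have : fib (j + 2) = fib j + fib (j + 1) := fib_add_two
    exact ⟨j, m - fib (j + 1), by omega, by omega, by omega⟩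

theorem a_mem_Icc {j m : ℕ} (hm : 0 < m) (hmj : m ≤ fib j) : a m ∈ Set.Icc 1 (fib j) := by
  induction m using Nat.strong_induction_on generalizing j with
  | _ m ih =>
  rcases (show m = 1 ∨ 2 ≤ m by omega) with rfl | hm
  · rw [a_one]; exact ⟨le_rfl, hmj⟩
  obtain ⟨k, m', hm', hm'k, rfl⟩ := exists_eq_fib_add hm
  have hk : 0 < fib (k + 1) := fib_pos.2 (by omega)
  obtain ⟨-, ha⟩ := ih m' (by omega) hm' hm'k
  have hkj : k + 2 ≤ j := by
    by_contra! h
    have := fib_mono (show j ≤ k + 1 by omega)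
    omega
  have := fib_mono hkj
  have : fib (k + 2) = fib k + fib (k + 1) := fib_add_two
  rw [a_fib_add hm' hm'k]
  exact ⟨by omega, by omega⟩

theorem le_two_mul_a (m : ℕ) : m ≤ 2 * a m := by
  rcases (show m ≤ 1 ∨ 2 ≤ m by omega) with hm | hm
  · interval_cases m <;> simp [a_zero, a_one]
  obtain ⟨k, m', hm', hm'k, rfl⟩ := exists_eq_fib_add hm
  obtain ⟨-, ha⟩ := a_mem_Icc hm' hm'k
  have : fib (k + 2) = fib k + fib (k + 1) := fib_add_two
  have : fib k ≤ fib (k + 1) := fib_le_fib_succ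
  rw [a_fib_add hm' hm'k]
  omega

def countLe (j x : ℕ) : ℕ := #{m ∈ Ioc 0 (fib j) | a m ≤ x}

theorem countLe_le_fib (j x : ℕ) : countLe j x ≤ fib j :=
  (card_filter_le _ _).trans_eq (by simp)

theorem countLe_of_fib_le {j x : ℕ} (h : fib j ≤ x) : countLe j x = fib j := by
  rw [countLe, filter_true_of_mem fun m hm => ?_, card_Ioc, Nat.sub_zero]
  rw [mem_Ioc] at hm
  exact (a_mem_Icc hm.1 hm.2).2.trans h

theorem countLe_add_two (j x : ℕ) :
    countLe (j + 2) x + countLe j (fib (j + 2) - 1 - x) = countLe (j + 1) x + fib j := by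
  have hfib : fib (j + 2) = fib (j + 1) + fib j := by rw [fib_add_two, add_comm]
  have hsplit : Ioc 0 (fib (j + 2)) =
      Ioc 0 (fib (j + 1)) ∪ (Ioc 0 (fib j)).map (addLeftEmbedding (fib (j + 1))) := by
    rw [map_add_left_Ioc, add_zero, ← hfib, Ioc_union_Ioc_eq_Ioc (Nat.zero_le _) fib_le_fib_succ]
  have hdisj : Disjoint (Ioc 0 (fib (j + 1)))
      ((Ioc 0 (fib j)).map (addLeftEmbedding (fib (j + 1)))) := by
    rw [map_add_left_Ioc, add_zero]
    exact Ioc_disjoint_Ioc_of_le le_rfl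
  have hreflect : ∀ m ∈ Ioc 0 (fib j),
      (a (fib (j + 1) + m) ≤ x ↔ ¬ a m ≤ fib (j + 2) - 1 - x) := fun m hm => by
    rw [mem_Ioc] at hm
    obtain ⟨h₁, h₂⟩ := a_mem_Icc hm.1 hm.2
    have := fib_mono (show j ≤ j + 2 by omega)
    rw [a_fib_add hm.1 hm.2]
    omega
  have hcompl := card_filter_add_card_filter_not (s := Ioc 0 (fib j))
    (p := fun m => a m ≤ fib (j + 2) - 1 - x)
  rw [card_Ioc, Nat.sub_zero] at hcompl
  unfold countLe
  rw [hsplit, filter_union, card_union_of_disjoint (disjoint_filter_filter hdisj), filter_map,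
    card_map, filter_congr (p := (fun m => a m ≤ x) ∘ addLeftEmbedding (fib (j + 1))) hreflect]
  omega

theorem countLe_bounds (j x : ℕ) :
    (x ≤ fib j → x ≤ countLe j x) ∧ countLe j x ≤ x + 1 := by
  induction j using Nat.strong_induction_on generalizing x with
  | _ j ih =>
  have hle := countLe_le_fib j x
  match j with
  | 0 =>
    rw [fib_zero] at hle ⊢
    omega
  | 1 =>
    rw [fib_one] at hle
    refine ⟨fun hx => ?_, by omega⟩
    rcases (show x = 0 ∨ fib 1 ≤ x by rw [fib_one] at hx ⊢; omega) with rfl | h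
    · exact zero_le _
    · rw [countLe_of_fib_le h]; exact hx
  | j + 2 =>
    have hrec := countLe_add_two j x
    have hfib : fib (j + 2) = fib (j + 1) + fib j := by rw [fib_add_two, add_comm]
    set y := fib (j + 2) - 1 - x
    rcases lt_or_ge x (fib (j + 1)) with hx | hx
    · have hy : countLe j y = fib j := countLe_of_fib_le (by omega)
      obtain ⟨hlo, hhi⟩ := ih (j + 1) (by omega) x
      exact ⟨fun _ => by have := hlo hx.le; omega, by omega⟩
    · have hx' : countLe (j + 1) x = fib (j + 1) := countLe_of_fib_le hx
      obtain ⟨hlo, hhi⟩ := ih j (by omega) y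
      have hlo := hlo (by omega)
      refine ⟨fun hxj => ?_, by omega⟩
      rcases hxj.lt_or_eq with hxj | rfl
      · omega
      · rw [countLe_of_fib_le le_rfl]

theorem ncard_setOf_a_le (x : ℕ) :
    {m | a m ≤ x}.ncard = countLe (2 * x + 1) x + 1 := by
  have hfib : 2 * x ≤ fib (2 * x + 1) := by have := le_fib_add_one (2 * x + 1); omega
  have hset : {m | a m ≤ x} = ↑(insert 0 {m ∈ Ioc 0 (fib (2 * x + 1)) | a m ≤ x}) := by
    ext m
    simp only [Set.mem_ofPred_eq, coe_insert, coe_filter, mem_Ioc, Set.mem_insert_iff]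
    have := le_two_mul_a m
    constructor
    · intro h; omega
    · rintro (rfl | ⟨-, h⟩)
      · rw [a_zero]; omega
      · exact h
  rw [hset, Set.ncard_coe_finset, card_insert_of_notMem (by simp), countLe]

theorem ncard_setOf_a_le_bounds (x : ℕ) :
    x + 1 ≤ {m | a m ≤ x}.ncard ∧ {m | a m ≤ x}.ncard ≤ x + 2 := by
  have hfib : x ≤ fib (2 * x + 1) := by have := le_fib_add_one (2 * x + 1); omega
  obtain ⟨hlo, hhi⟩ := countLe_bounds (2 * x + 1) x
  rw [ncard_setOf_a_le]
  exact ⟨by have := hlo hfib; omega, by omega⟩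

theorem sInf_setOf_add_two_le_add_eq {N : ℕ → ℕ} (hN : ∀ x, x + 1 ≤ N x ∧ N x ≤ x + 2)
    (n : ℕ) :
    sInf {x | n + 2 ≤ N x} + N n = 2 * n + 2 := by
  obtain ⟨h₁, h₂⟩ := hN n
  have hmem : 2 * n + 2 - N n ∈ {x | n + 2 ≤ N x} := by
    rcases (show N n = n + 2 ∨ N n = n + 1 by omega) with h | h
    · rw [h, show 2 * n + 2 - (n + 2) = n by omega]; exact h.ge
    · rw [h, show 2 * n + 2 - (n + 1) = n + 1 by omega]; exact (hN (n + 1)).1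
  have hleast : ∀ x ∈ {x | n + 2 ≤ N x}, 2 * n + 2 - N n ≤ x := fun x hx => by
    have := (hN x).2
    rw [Set.mem_ofPred_eq] at hx
    rcases (show x = n ∨ n < x by omega) with rfl | hlt <;> omega
  rw [le_antisymm (Nat.sInf_le hmem) (le_csInf ⟨_, hmem⟩ hleast)]
  omega

theorem b_zero : b 0 = 0 :=
  Nat.sInf_eq_zero.2 (Or.inl (ncard_setOf_a_le_bounds 0).1)

theorem b_succ_add_ncard (n : ℕ) : b (n + 1) + {m | a m ≤ n}.ncard = 2 * n + 2 :=
  sInf_setOf_add_two_le_add_eq ncard_setOf_a_le_bounds n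

theorem c_zero : c 0 = {m | a m ≤ 0}.ncard := by
  simp only [c, Nat.le_zero]

theorem ncard_setOf_a_le_succ (n : ℕ) :
    {m | a m ≤ n + 1}.ncard = {m | a m ≤ n}.ncard + c (n + 1) := by
  have hfinite (x : ℕ) : {m | a m ≤ x}.Finite :=
    (Set.finite_Iic (2 * x)).subset fun m (hm : a m ≤ x) => by
      have := le_two_mul_a m
      simp only [Set.mem_Iic]; omega
  have hunion : {m | a m ≤ n + 1} = {m | a m ≤ n} ∪ {m | a m = n + 1} := by
    ext m; simp only [Set.mem_ofPred_eq, Set.mem_union]; omega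
  have hdisj : Disjoint {m | a m ≤ n} {m | a m = n + 1} :=
    Set.disjoint_left.2 fun m (h₁ : a m ≤ n) (h₂ : a m = n + 1) => by omega
  rw [hunion, Set.ncard_union_eq hdisj (hfinite n)
    ((hfinite (n + 1)).subset fun m (hm : a m = n + 1) => hm.le), c]

/-- For every `n`, `b (n+1) - b n = 2 - c n`; in particular
`b (n+1) - b n ∈ {0, 1, 2}`. -/
theorem a368200_first_difference (n : ℕ) :
    (b (n + 1) : ℤ) - b n = 2 - c n ∧
      (b (n + 1) : ℤ) - b n ∈ ({0, 1, 2} : Set ℤ) := by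
  obtain ⟨hdiff, hc⟩ : (b (n + 1) : ℤ) - b n = 2 - c n ∧ c n ≤ 2 := by
    have hb := b_succ_add_ncard n
    have hN := ncard_setOf_a_le_bounds n
    cases n with
    | zero => rw [b_zero, c_zero]; omega
    | succ k =>
      have hb' := b_succ_add_ncard k
      have hN' := ncard_setOf_a_le_bounds k
      have hc := ncard_setOf_a_le_succ k
      omega
  refine ⟨hdiff, ?_⟩
  simp only [Set.mem_insert_iff, Set.mem_singleton_iff]
  omega
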